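/- Pessimistic cost of the tail-recursive take'A_: for all n, accumulator ys, list xs, and approximations of these inputs, every execution of take'A_ has cost exactly min n (length xs) + 1, independent of the output approximation. -/

import Mathlib

namespace Clair

/-- The clairvoyance monad: sets of value-cost pairs. -/
def M (a : Type) : Type := a → Nat → Prop

def ret {a : Type} (x : a) : M a := fun y n => y = x ∧ n = 0

def bind {a b : Type} (u : M a) (k : a → M b) : M b :=
  fun y n => ∃ x nx ny, u x nx ∧ k x y ny ∧ n = nx + ny

def tick : M Unit := fun _ n => n = 1

inductive T (a : Type) : Type
  | Thunk (v : a) : T a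
  | Undefined : T a

def thunk {a : Type} (u : M a) : M (T a) := fun t n =>
  match t with
  | .Thunk v => u v n
  | .Undefined => n = 0

def forcing {a b : Type} (t : T a) (k : a → M b) : M b :=
  match t with
  | .Thunk v => k v
  | .Undefined => fun _ _ => False

/-- `t >>! s` is `t >> s` in the paper: `bind t (fun _ => s)`. -/
def seqM {a b : Type} (t : M a) (s : M b) : M b := bind t (fun _ => s)

infixl:55 " >>! " => seqM

def pessimistic {a : Type} (u : M a) (r : a → Nat → Prop) : Prop :=
  ∀ x n, u x n → r x n

def optimistic {a : Type} (u : M a) (r : a → Nat → Prop) : Prop :=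
  ∃ x n, u x n ∧ r x n

inductive listA (a : Type) : Type
  | NilA : listA a
  | ConsA (x : T a) (xs : T (listA a)) : listA a

/-- Lifting a relation through the thunk type `T` (for `less_defined`). -/
inductive LDT {a : Type} (ld : a → a → Prop) : T a → T a → Prop
  | undef : ∀ t, LDT ld T.Undefined t
  | thunk : ∀ {x y}, ld x y → LDT ld (T.Thunk x) (T.Thunk y)

inductive less_defined {a : Type} : listA a → listA a → Prop
  | nil : less_defined .NilA .NilA
  | cons : ∀ {x y : T a} {xs ys : T (listA a)},
      LDT Eq x y → LDT less_defined xs ys →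
      less_defined (.ConsA x xs) (.ConsA y ys)

def exactA {a : Type} : List a → listA a
  | [] => .NilA
  | x :: xs => .ConsA (.Thunk x) (.Thunk (exactA xs))

/-- Lifting a relation through `T` on the left only (for `is_approx`). -/
inductive TA {a b : Type} (R : a → b → Prop) : T a → b → Prop
  | undef : ∀ y, TA R T.Undefined y
  | thunk : ∀ {x y}, R x y → TA R (T.Thunk x) y

inductive is_approx {a : Type} : listA a → List a → Prop
  | nil : is_approx .NilA []
  | cons : ∀ {xA : T a} {x : a} {xsA : T (listA a)} {xs : List a},
      TA Eq xA x → TA is_approx xsA xs →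
      is_approx (.ConsA xA xsA) (x :: xs)

def sizeX' {a : Type} (n0 : Nat) : listA a → Nat
  | .NilA => n0
  | .ConsA _ (.Thunk xs) => sizeX' n0 xs + 1
  | .ConsA _ .Undefined => 1

def sizeX {a : Type} (n0 : Nat) : T (listA a) → Nat
  | .Thunk xs => sizeX' n0 xs
  | .Undefined => 0

def appendA_ {a : Type} : listA a → T (listA a) → M (listA a)
  | .NilA, ysA => tick >>! forcing ysA ret
  | .ConsA x xs1, ysA =>
      tick >>! bind (thunk (match xs1 with
          | .Thunk xs1' => appendA_ xs1' ysA
          | .Undefined => fun _ _ => False))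
        (fun t => ret (.ConsA x t))

def appendA {a : Type} (xsA ysA : T (listA a)) : M (listA a) :=
  forcing xsA (fun xs => appendA_ xs ysA)

def takeA_ {a : Type} : Nat → listA a → M (listA a)
  | 0, _ => tick >>! ret .NilA
  | _ + 1, .NilA => tick >>! ret .NilA
  | n + 1, .ConsA x xs1 =>
      tick >>! bind (thunk (match xs1 with
          | .Thunk xs1' => takeA_ n xs1'
          | .Undefined => fun _ _ => False))
        (fun t => ret (.ConsA x t))

def takeA {a : Type} (n : Nat) (xsA : T (listA a)) : M (listA a) :=
  forcing xsA (fun xs => takeA_ n xs)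

/-- Cost-free monadic reversal (the `rev` whose cost is axiomatized to 0). -/
def revA_ {a : Type} : listA a → T (listA a) → M (listA a)
  | .NilA, acc => forcing acc ret
  | .ConsA x xs1, acc =>
      match xs1 with
      | .Thunk xs1' => revA_ xs1' (.Thunk (.ConsA x acc))
      | .Undefined => fun _ _ => False

def revA {a : Type} (xsA : T (listA a)) : M (listA a) :=
  forcing xsA (fun xs => revA_ xs (.Thunk .NilA))

/-- Tail-recursive `take'` translated to the clairvoyance monad,
    with one tick per call and a zero-cost `rev`. -/
def take'A_ {a : Type} : T (listA a) → Nat → listA a → M (listA a)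
  | ysA, 0, _ => tick >>! revA ysA
  | ysA, _ + 1, .NilA => tick >>! revA ysA
  | ysA, n + 1, .ConsA x xs1 =>
      tick >>! (match xs1 with
        | .Thunk xs1' => take'A_ (.Thunk (.ConsA x ysA)) n xs1'
        | .Undefined => fun _ _ => False)

theorem pessimistic_revA_ {a : Type} :
    ∀ (xsA : listA a) (acc : T (listA a)), pessimistic (revA_ xsA acc) (fun _ c => c = 0)
  | .NilA, .Thunk _, _, _, h => h.2
  | .ConsA _ (.Thunk xsA), _, x, c, h => pessimistic_revA_ xsA _ x c h

theorem pessimistic_revA {a : Type} :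
    ∀ ysA : T (listA a), pessimistic (revA ysA) (fun _ c => c = 0)
  | .Thunk ys, x, c, h => pessimistic_revA_ ys _ x c h

theorem pessimistic_tick_seqM {a : Type} {m : M a} {k : Nat}
    (hm : pessimistic m (fun _ c => c = k)) :
    pessimistic (tick >>! m) (fun _ c => c = k + 1) := by
  rintro x _ ⟨_, _, c, rfl, hc, rfl⟩
  rw [hm x c hc, Nat.add_comm]

end Clair

open Clair in
theorem take'A_pessim {a : Type} (n : Nat) (xs : List a)
    (ysA : T (listA a)) (xsA : listA a)
    (Hxs : is_approx xsA xs) :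
    pessimistic (take'A_ ysA n xsA)
      (fun _ c => c = min n xs.length + 1) := by
  induction xs generalizing xsA n ysA with
  | nil =>
    cases Hxs
    cases n <;> exact pessimistic_tick_seqM (pessimistic_revA ysA)
  | cons _ xs ih =>
    obtain _ | ⟨_, hxs⟩ := Hxs
    cases n with
    | zero => exact pessimistic_tick_seqM (pessimistic_revA ysA)
    | succ n =>
      rw [List.length_cons, Nat.add_min_add_right]
      cases hxs with
      | undef => exact pessimistic_tick_seqM fun _ _ h => h.elim
      | thunk hxs => exact pessimistic_tick_seqM (ih n _ _ hxs)
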